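/- arXiv:1111.0996 — 7 statements merged into one kernel-verified Lean document; each statement's English description precedes it below -/
import Mathlib

section
/- For all n ≥ 1 and k ≥ 0, the generalized Catalan number C_n^(k) = ((k+1)/(2n+k+1)) * binomial(2n+k+1, n) satisfies the identity C_n^(k) = sum over s from 1 to k+1 of C_{n-1}^(s). -/
/-! The ballot-number form `gc n k = C(2n+k, n) - C(2n+k, n+k+1)` turns both recurrences
`gc (n+1) 0 = gc n 1` and `gc (n+1) (k+1) = gc (n+1) k + gc n (k+2)` into two instances of
Pascal's rule; the identity then telescopes by induction on `k`. -/

def gc (n k : ℕ) : ℚ := ((k : ℚ) + 1) / (2 * (n : ℚ) + (k : ℚ) + 1) * ((2 * n + k + 1).choose n : ℚ)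

def cat (n : ℕ) : ℚ := 1 / ((n : ℚ) + 1) * ((2 * n).choose n : ℚ)

def Cond {n : ℕ} (u : Fin n → ℕ) : Prop :=
  ∀ i j : Fin n, i < j →
    ¬(1 ≤ (u j : ℤ) - (((j : ℕ) : ℤ) - ((i : ℕ) : ℤ)) ∧
      (u j : ℤ) - (((j : ℕ) : ℤ) - ((i : ℕ) : ℤ)) ≤ (u i : ℤ) - 1)

-- The subtracted term is `C(2n+k, n-1)` written by symmetry, so that it also vanishes at `n = 0`.
theorem gc_eq_choose_sub_choose (n k : ℕ) :
    gc n k = ((2 * n + k).choose n : ℚ) - ((2 * n + k).choose (n + k + 1) : ℚ) := by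
  have hlow := Nat.choose_mul_succ_eq (2 * n + k) n
  have hhigh := Nat.choose_mul_succ_eq (2 * n + k) (n + k + 1)
  rw [show 2 * n + k + 1 - n = n + k + 1 by omega] at hlow
  rw [show 2 * n + k + 1 - (n + k + 1) = n by omega,
    ← Nat.choose_symm_of_eq_add (by omega : 2 * n + k + 1 = n + (n + k + 1))] at hhigh
  have hlow' : ((2 * n + k).choose n : ℚ) * (2 * n + k + 1) =
      ((2 * n + k + 1).choose n : ℚ) * (n + k + 1) := by exact_mod_cast hlow
  have hhigh' : ((2 * n + k).choose (n + k + 1) : ℚ) * (2 * n + k + 1) =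
      ((2 * n + k + 1).choose n : ℚ) * n := by exact_mod_cast hhigh
  have hpos : (2 * (n : ℚ) + k + 1) ≠ 0 := by positivity
  rw [gc, div_mul_eq_mul_div, div_eq_iff hpos]
  linear_combination hhigh' - hlow'

theorem gc_succ_zero (n : ℕ) : gc (n + 1) 0 = gc n 1 := by
  have hlow : ((2 * n + 2).choose (n + 1) : ℚ) =
      (2 * n + 1).choose n + (2 * n + 1).choose (n + 1) := by
    exact_mod_cast Nat.choose_succ_succ' (2 * n + 1) n
  have hhigh : ((2 * n + 2).choose (n + 2) : ℚ) =
      (2 * n + 1).choose (n + 1) + (2 * n + 1).choose (n + 2) := by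
    exact_mod_cast Nat.choose_succ_succ' (2 * n + 1) (n + 1)
  simp only [gc_eq_choose_sub_choose]
  ring_nf at hlow hhigh ⊢
  linear_combination hlow - hhigh

theorem gc_succ_succ (n k : ℕ) : gc (n + 1) (k + 1) = gc (n + 1) k + gc n (k + 2) := by
  have hlow : ((2 * n + k + 3).choose (n + 1) : ℚ) =
      (2 * n + k + 2).choose n + (2 * n + k + 2).choose (n + 1) := by
    exact_mod_cast Nat.choose_succ_succ' (2 * n + k + 2) n
  have hhigh : ((2 * n + k + 3).choose (n + k + 3) : ℚ) =
      (2 * n + k + 2).choose (n + k + 2) + (2 * n + k + 2).choose (n + k + 3) := by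
    exact_mod_cast Nat.choose_succ_succ' (2 * n + k + 2) (n + k + 2)
  simp only [gc_eq_choose_sub_choose]
  ring_nf at hlow hhigh ⊢
  linear_combination hlow - hhigh

theorem gc_succ_eq_sum (n k : ℕ) : gc (n + 1) k = ∑ s ∈ Finset.Icc 1 (k + 1), gc n s := by
  induction k with
  | zero => simpa using gc_succ_zero n
  | succ k ih =>
    rw [Finset.sum_Icc_succ_top (by omega), ← ih, gc_succ_succ]

theorem stmt0 (n k : ℕ) (hn : 1 ≤ n) :
    gc n k = ∑ s ∈ Finset.Icc 1 (k + 1), gc (n - 1) s := by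
  obtain ⟨m, rfl⟩ := Nat.exists_eq_add_of_le' hn
  exact gc_succ_eq_sum m k
end

section
/- The map sending a sequence (v_1, ..., v_n) to the sequence (v_n − 1, v_{n−1} − 1, ..., v_1 − 1) is a bijection from the set of sequences with 1 ≤ v_i ≤ i satisfying condition (1) onto the set of inversion codes of 231-avoiding permutations of [n]. -/
def invCode {n : ℕ} (p : Equiv.Perm (Fin n)) : Fin n → ℕ :=
  fun i => (Finset.univ.filter (fun j : Fin n => i < j ∧ p j < p i)).card

def Avoids231 {n : ℕ} (p : Equiv.Perm (Fin n)) : Prop :=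
  ¬∃ a b c : Fin n, a < b ∧ b < c ∧ p c < p a ∧ p a < p b

/-!
After reversing and shifting, `v ↦ u` with `u i = v (rev i) - 1`, the bounds `1 ≤ v i ≤ i + 1`
become `u i < n - i` and condition (1) becomes `NestedCode u`: for `a < b`, `b - a ≤ u a` forces
`u b + (b - a) ≤ u a`. The inversion code is a bijection from permutations onto the sequences with
`u i < n - i` (it is injective, by comparing two permutations at their first difference, and both
sides have `n!` elements). For a 231-avoiding permutation the positions to the right of `a` carrying
smaller values form the interval `(a, a + u a]`, and avoiding 231 amounts to these intervals being
nested.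
-/

open Finset

section InversionCode

variable {n : ℕ}

def smallerRight (p : Equiv.Perm (Fin n)) (a : Fin n) : Finset (Fin n) :=
  univ.filter fun j => a < j ∧ p j < p a

lemma mem_smallerRight {p : Equiv.Perm (Fin n)} {a j : Fin n} :
    j ∈ smallerRight p a ↔ a < j ∧ p j < p a := by
  simp [smallerRight]

lemma invCode_eq_card (p : Equiv.Perm (Fin n)) (a : Fin n) :
    invCode p a = (smallerRight p a).card := rfl

lemma invCode_lt (p : Equiv.Perm (Fin n)) (a : Fin n) : invCode p a < n - a := by
  have : invCode p a ≤ (Ioi a).card :=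
    card_le_card fun j hj => mem_Ioi.2 (mem_smallerRight.1 hj).1
  rw [Fin.card_Ioi] at this
  omega

lemma invCode_eq_card_sdiff (p : Equiv.Perm (Fin n)) (a : Fin n) :
    invCode p a = (Iio (p a) \ (Iio a).image p).card := by
  rw [invCode_eq_card, ← card_image_of_injective _ p.injective]
  congr 1
  ext x
  obtain ⟨j, rfl⟩ := p.surjective x
  simp only [p.injective.mem_finset_image, mem_smallerRight, mem_sdiff, mem_Iio]
  constructor
  · rintro ⟨haj, hj⟩
    exact ⟨hj, not_lt.2 haj.le⟩
  · rintro ⟨hj, hja⟩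
    refine ⟨lt_of_le_of_ne (not_lt.1 hja) ?_, hj⟩
    rintro rfl
    exact lt_irrefl _ hj

/-- The values counted at `a` by `p` are among those counted by `q`, and `p a` is counted by `q`
but not by `p`. -/
lemma invCode_lt_invCode {p q : Equiv.Perm (Fin n)} {a : Fin n}
    (hleft : ∀ j < a, p j = q j) (hpq : p a < q a) : invCode p a < invCode q a := by
  have himage : (Iio a).image p = (Iio a).image q :=
    image_congr fun j hj => hleft j (mem_Iio.1 hj)
  rw [invCode_eq_card_sdiff, invCode_eq_card_sdiff, himage]
  refine card_lt_card ⟨sdiff_subset_sdiff (Iio_subset_Iio hpq.le) subset_rfl, fun hsub => ?_⟩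
  have hpa : p a ∈ Iio (q a) \ (Iio a).image q := by
    rw [← himage, mem_sdiff, mem_Iio, p.injective.mem_finset_image, mem_Iio]
    exact ⟨hpq, lt_irrefl a⟩
  exact lt_irrefl _ (mem_Iio.1 (mem_sdiff.1 (hsub hpa)).1)

lemma invCode_injective : Function.Injective (invCode (n := n)) := by
  intro p q h
  ext1 a
  induction a using WellFoundedLT.induction with
  | _ a ih =>
    rcases lt_trichotomy (p a) (q a) with hlt | heq | hgt
    · exact absurd (congrFun h a) (invCode_lt_invCode ih hlt).ne
    · exact heq
    · exact absurd (congrFun h a) (invCode_lt_invCode (fun j hj => (ih j hj).symm) hgt).ne'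

lemma prod_univ_sub_eq_factorial (n : ℕ) : ∏ i : Fin n, (n - (i : ℕ)) = n.factorial := by
  induction n with
  | zero => rfl
  | succ n ih => simp [Fin.prod_univ_succ, ih, Nat.factorial_succ]

lemma exists_invCode_eq {u : Fin n → ℕ} (hu : ∀ i, u i < n - i) :
    ∃ p : Equiv.Perm (Fin n), invCode p = u := by
  let code : Equiv.Perm (Fin n) → ∀ i : Fin n, Fin (n - i) :=
    fun p i => ⟨invCode p i, invCode_lt p i⟩
  have hcode : Function.Bijective code := by
    refine (Fintype.bijective_iff_injective_and_card code).2 ⟨fun p q h => ?_, ?_⟩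
    · exact invCode_injective (funext fun i => congrArg Fin.val (congrFun h i))
    · simp [Fintype.card_perm, Fintype.card_pi, prod_univ_sub_eq_factorial]
  obtain ⟨p, hp⟩ := hcode.2 fun i => ⟨u i, hu i⟩
  exact ⟨p, funext fun i => congrArg Fin.val (congrFun hp i)⟩

end InversionCode

section Pattern231

variable {n : ℕ}

def NestedCode (u : Fin n → ℕ) : Prop :=
  ∀ a b : Fin n, a < b → (b : ℕ) - a ≤ u a → u b + (b - a) ≤ u a

variable {p : Equiv.Perm (Fin n)}

lemma Avoids231.apply_lt_of_lt_of_lt (hp : Avoids231 p) {a k j : Fin n} (hak : a < k)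
    (hkj : k < j) (hj : p j < p a) : p k < p a := by
  refine lt_of_le_of_ne (not_lt.1 fun hak' => hp ⟨a, k, j, hak, hkj, hj, hak'⟩) ?_
  exact fun h => hak.ne' (p.injective h)

lemma Avoids231.nestedCode (hp : Avoids231 p) : NestedCode (invCode p) := by
  intro a b hab hge
  have hpb : p b < p a := by
    by_contra! hba
    have hsub : smallerRight p a ⊆ Ioo a b := by
      intro j hj
      obtain ⟨haj, hj⟩ := mem_smallerRight.1 hj
      refine mem_Ioo.2 ⟨haj, lt_of_not_ge fun hbj => not_lt.2 hba ?_⟩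
      rcases hbj.eq_or_lt with rfl | hbj
      exacts [hj, Avoids231.apply_lt_of_lt_of_lt hp hab hbj hj]
    have := card_le_card hsub
    rw [← invCode_eq_card, Fin.card_Ioo] at this
    omega
  have hIoc : Ioc a b ⊆ smallerRight p a := by
    intro k hk
    obtain ⟨hak, hkb⟩ := mem_Ioc.1 hk
    refine mem_smallerRight.2 ⟨hak, ?_⟩
    rcases hkb.eq_or_lt with rfl | hkb
    exacts [hpb, Avoids231.apply_lt_of_lt_of_lt hp hak hkb hpb]
  have hsub : smallerRight p b ⊆ smallerRight p a \ Ioc a b := by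
    intro j hj
    obtain ⟨hbj, hj⟩ := mem_smallerRight.1 hj
    exact mem_sdiff.2 ⟨mem_smallerRight.2 ⟨hab.trans hbj, hj.trans hpb⟩,
      fun h => (mem_Ioc.1 h).2.not_gt hbj⟩
  have := card_le_card hsub
  rw [card_sdiff_of_subset hIoc, Fin.card_Ioc, ← invCode_eq_card, ← invCode_eq_card] at this
  omega

lemma NestedCode.avoids231 (h : NestedCode (invCode p)) : Avoids231 p := by
  rintro ⟨a, b, c, hab, hbc, hca, hpab⟩
  -- pass to the leftmost `b` of a 231 pattern with the given `a` and `c`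
  set F := (Ioo a c).filter fun j => p a < p j
  have hbF : b ∈ F := mem_filter.2 ⟨mem_Ioo.2 ⟨hab, hbc⟩, hpab⟩
  set b₀ := F.min' ⟨b, hbF⟩
  obtain ⟨hb₀, hpab₀⟩ := mem_filter.1 (F.min'_mem ⟨b, hbF⟩)
  obtain ⟨hab₀, hb₀c⟩ := mem_Ioo.1 hb₀
  have hmid : ∀ k, a < k → k < b₀ → p k < p a := by
    intro k hak hkb₀
    refine lt_of_le_of_ne (not_lt.1 fun hak' => ?_) fun h => hak.ne' (p.injective h)
    exact (F.min'_le k (mem_filter.2 ⟨mem_Ioo.2 ⟨hak, hkb₀.trans hb₀c⟩, hak'⟩)).not_gt hkb₀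
  have hlower : insert c (Ioo a b₀) ⊆ smallerRight p a := by
    intro j hj
    rcases mem_insert.1 hj with rfl | hj
    · exact mem_smallerRight.2 ⟨hab₀.trans hb₀c, hca⟩
    · obtain ⟨haj, hjb₀⟩ := mem_Ioo.1 hj
      exact mem_smallerRight.2 ⟨haj, hmid j haj hjb₀⟩
  have hupper : smallerRight p a ⊆ Ioo a b₀ ∪ smallerRight p b₀ := by
    intro j hj
    obtain ⟨haj, hj⟩ := mem_smallerRight.1 hj
    rcases lt_trichotomy j b₀ with hjb₀ | rfl | hb₀j
    · exact mem_union_left _ (mem_Ioo.2 ⟨haj, hjb₀⟩)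
    · exact absurd hj hpab₀.not_gt
    · exact mem_union_right _ (mem_smallerRight.2 ⟨hb₀j, hj.trans hpab₀⟩)
  have hc : c ∉ Ioo a b₀ := fun hc => (mem_Ioo.1 hc).2.not_gt hb₀c
  have h₁ := card_le_card hlower
  have h₂ := (card_le_card hupper).trans (card_union_le _ _)
  rw [card_insert_of_notMem hc, Fin.card_Ioo, ← invCode_eq_card] at h₁
  rw [Fin.card_Ioo, ← invCode_eq_card, ← invCode_eq_card] at h₂
  have := h a b₀ hab₀ (by omega)
  omega

lemma avoids231_iff_nestedCode : Avoids231 p ↔ NestedCode (invCode p) :=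
  ⟨Avoids231.nestedCode, NestedCode.avoids231⟩

lemma setOf_avoids231_invCode :
    {u : Fin n → ℕ | ∃ p : Equiv.Perm (Fin n), Avoids231 p ∧ u = invCode p} =
      {u | (∀ i : Fin n, u i < n - i) ∧ NestedCode u} := by
  ext u
  constructor
  · rintro ⟨p, hp, rfl⟩
    exact ⟨invCode_lt p, avoids231_iff_nestedCode.1 hp⟩
  · rintro ⟨hlt, hu⟩
    obtain ⟨p, rfl⟩ := exists_invCode_eq hlt
    exact ⟨p, avoids231_iff_nestedCode.2 hu, rfl⟩

end Pattern231

lemma cond_iff_nestedCode {n : ℕ} {v : Fin n → ℕ} (hv : ∀ i, 1 ≤ v i) :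
    Cond v ↔ NestedCode fun i => v i.rev - 1 := by
  rw [NestedCode, Fin.rev_surjective.forall₂, forall_comm]
  refine forall₂_congr fun i j => ?_
  rw [Fin.rev_lt_rev]
  refine imp_congr_right fun hij => ?_
  simp only [Fin.rev_rev, Fin.val_rev]
  have := hv i
  have := hv j
  have := j.isLt
  have : (i : ℕ) < j := hij
  omega

theorem stmt6 (n : ℕ) :
    Set.BijOn (fun (v : Fin n → ℕ) (i : Fin n) => v i.rev - 1)
      {v : Fin n → ℕ | (∀ i : Fin n, 1 ≤ v i ∧ v i ≤ (i : ℕ) + 1) ∧ Cond v}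
      {u : Fin n → ℕ | ∃ p : Equiv.Perm (Fin n), Avoids231 p ∧ u = invCode p} := by
  rw [setOf_avoids231_invCode]
  refine Set.InvOn.bijOn (f' := fun u i => u i.rev + 1) ⟨?_, ?_⟩ ?_ ?_
  · rintro v ⟨hv, -⟩
    funext i
    simp only [Fin.rev_rev]
    have := (hv i).1
    omega
  · rintro u -
    funext i
    simp only [Fin.rev_rev, Nat.add_sub_cancel]
  · rintro v ⟨hv, hcond⟩
    refine ⟨fun i => ?_, (cond_iff_nestedCode fun i => (hv i).1).1 hcond⟩
    dsimp only
    have := hv i.rev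
    rw [Fin.val_rev] at this
    omega
  · rintro u ⟨hlt, hu⟩
    refine ⟨fun i => ?_, (cond_iff_nestedCode fun i => Nat.le_add_left 1 _).2 ?_⟩
    · dsimp only
      have := hlt i.rev
      rw [Fin.val_rev] at this
      omega
    · simpa only [Fin.rev_rev, Nat.add_sub_cancel] using hu
end

section
/- For n ≥ 1 and s ≥ 0, if (u_1, ..., u_n) is a sequence of positive integers with u_n = n + s satisfying condition (1), then u_i ≤ s + i for all 1 ≤ i ≤ n − 1. -/
theorem stmt7 (n s : ℕ) (hn : 1 ≤ n) (u : Fin n → ℕ)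
    (hpos : ∀ i, 1 ≤ u i) (hlast : u ⟨n - 1, by omega⟩ = n + s) (hc : Cond u) :
    ∀ i : Fin n, (i : ℕ) + 1 ≤ n - 1 → u i ≤ s + (i : ℕ) + 1 := by
  intro i hi
  by_contra h
  push_neg at h
  have hij : i < (⟨n - 1, by omega⟩ : Fin n) := by
    simp [Fin.lt_def]; omega
  have := hc i ⟨n - 1, by omega⟩ hij
  simp only [hlast, Fin.val_mk, not_and, not_le] at this
  have hni : (i : ℕ) < n := i.isLt
  omega
end

section
/- For n ≥ 1 and k ≥ 0, the set of sequences (u_1, ..., u_n) with 1 ≤ u_i ≤ n + k + 1, u_n = n + s (for fixed 1 ≤ s ≤ k + 1), and satisfying condition (1), coincides with the set of sequences of positive integers (with no upper bound) having u_n = n + s and satisfying condition (1). -/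
theorem stmt10 (n k s : ℕ) (hn : 1 ≤ n) (hs1 : 1 ≤ s) (hs2 : s ≤ k + 1) :
    {u : Fin n → ℕ | (∀ i, 1 ≤ u i ∧ u i ≤ n + k + 1) ∧ u ⟨n - 1, by omega⟩ = n + s ∧ Cond u}
      = {u : Fin n → ℕ | (∀ i, 1 ≤ u i) ∧ u ⟨n - 1, by omega⟩ = n + s ∧ Cond u} := by
  ext u
  simp only [Set.mem_setOf_eq]
  constructor
  · rintro ⟨h1, h2, h3⟩
    exact ⟨fun i => (h1 i).1, h2, h3⟩
  · rintro ⟨h1, h2, h3⟩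
    refine ⟨fun i => ⟨h1 i, ?_⟩, h2, h3⟩
    by_cases hi : (i : ℕ) = n - 1
    · have hieq : i = ⟨n - 1, by omega⟩ := Fin.ext hi
      rw [hieq, h2]; omega
    · have hi' : (i : ℕ) < n - 1 := by have := i.isLt; omega
      have hc := h3 i ⟨n - 1, by omega⟩ (by simpa [Fin.lt_def] using hi')
      have hni : ((⟨n - 1, by omega⟩ : Fin n) : ℕ) = n - 1 := rfl
      simp only [h2, hni] at hc
      push_neg at hc
      have key := hc (by omega)
      omega
end

section
/- The Catalan transform satisfies the reversal identity: for n ≥ 1, Σ_{k=0}^{n} (k/(2n−k)) · binomial(2n−k, n−k) · a_k = Σ_{k=0}^{n−1} C_k^(n−1−k) · a_{n−k} for any sequence (a_m), where C_k^(j) = ((j+1)/(2k+j+1)) · binomial(2k+j+1, k). -/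
/-! The `k = 0` term on the left vanishes, and after reversing the order of summation the two
sides agree term by term: `C_k^(j)` is the ballot number at `n = k + j + 1`, index `j + 1`. -/

lemma gc_eq_ballot (k j : ℕ) :
    gc k j = ((j + 1 : ℕ) : ℚ) / ((2 * (k + j + 1) - (j + 1) : ℕ) : ℚ) *
      ((2 * (k + j + 1) - (j + 1)).choose (k + j + 1 - (j + 1)) : ℚ) := by
  rw [gc, show 2 * (k + j + 1) - (j + 1) = 2 * k + j + 1 by omega,
    show k + j + 1 - (j + 1) = k by omega]
  push_cast
  ring

theorem stmt13_general (n : ℕ) (a : ℕ → ℚ) :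
    ∑ k ∈ Finset.range (n + 1),
        (k : ℚ) / ((2 * n - k : ℕ) : ℚ) * ((2 * n - k).choose (n - k) : ℚ) * a k
      = ∑ k ∈ Finset.range n, gc k (n - 1 - k) * a (n - k) := by
  rw [Finset.sum_range_succ', ← Finset.sum_range_reflect]
  simp only [Nat.cast_zero, zero_div, zero_mul, add_zero]
  refine Finset.sum_congr rfl fun k hk => ?_
  obtain ⟨j, rfl⟩ : ∃ j, n = k + j + 1 := ⟨n - 1 - k, by grind⟩
  rw [show k + j + 1 - 1 - k = j by omega, show k + j + 1 - k = j + 1 by omega, gc_eq_ballot]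

theorem stmt13 (n : ℕ) (hn : 1 ≤ n) (a : ℕ → ℚ) :
    ∑ k ∈ Finset.range (n + 1),
        (k : ℚ) / ((2 * n - k : ℕ) : ℚ) * ((2 * n - k).choose (n - k) : ℚ) * a k
      = ∑ k ∈ Finset.range n, gc k (n - 1 - k) * a (n - k) :=
  stmt13_general n a
end

section
/- For n ≥ 1 and 1 ≤ k ≤ n−1, if (u_1, ..., u_n) is a sequence with 1 ≤ u_i ≤ n satisfying condition (1), u_k > k, and u_j ≤ j for all j > k, then u_j ≤ j − k for all j ∈ [k+1, n]. -/
theorem stmt14 (n k : ℕ) (hn : 1 ≤ n) (hk1 : 1 ≤ k) (hk2 : k ≤ n - 1)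
    (u : Fin n → ℕ) (hb : ∀ i, 1 ≤ u i ∧ u i ≤ n) (hc : Cond u)
    (hk : k < u ⟨k - 1, by omega⟩) (hafter : ∀ j : Fin n, k < (j : ℕ) + 1 → u j ≤ (j : ℕ) + 1) :
    ∀ j : Fin n, k + 1 ≤ (j : ℕ) + 1 → u j ≤ (j : ℕ) + 1 - k := by
  intro j hj
  have h1 := hc ⟨k - 1, by omega⟩ j (by simp [Fin.lt_def]; omega)
  have h2 := hafter j (by omega)
  simp only [not_and, not_le] at h1
  omega
end

section
/- For n ≥ 1 and 0 ≤ k ≤ n−1, the number of sequences (u_1, ..., u_n) with 1 ≤ u_i ≤ n, satisfying condition (1), and whose largest index i with u_i > i equals k (with k = 0 meaning u_i ≤ i for all i), equals C_k^(n−1−k) · C_{n−k}. -/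
open Finset

theorem gc_zero_left (b : ℕ) : gc 0 b = 1 := by
  simp only [gc, Nat.choose_zero_right]
  field_simp
  ring

theorem cast_succ_mul_catalan (m : ℕ) : ((m : ℚ) + 1) * catalan m = (2 * m).choose m := by
  exact_mod_cast succ_mul_catalan_eq_centralBinom m

theorem cat_eq_catalan (m : ℕ) : cat m = catalan m := by
  rw [cat, ← cast_succ_mul_catalan]
  field_simp

theorem gc_zero_right (m : ℕ) : gc m 0 = catalan m := by
  have h : ((2 * m + 1 : ℕ) : ℚ) * (2 * m).choose m = (2 * m + 1).choose m * (m + 1 : ℕ) := by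
    exact_mod_cast Nat.choose_symm_half m ▸ Nat.add_one_mul_choose_eq (2 * m) m
  push_cast at h
  rw [← cast_succ_mul_catalan] at h
  simp only [gc, CharP.cast_eq_zero, add_zero]
  field_simp
  apply mul_left_cancel₀ (show (m : ℚ) + 1 ≠ 0 by positivity)
  linear_combination -h

theorem gc_one_right (m : ℕ) : gc m 1 = catalan (m + 1) := by
  have h : ((2 * m + 2).choose (m + 1) : ℚ) * (m + 1) = (2 * m + 2).choose m * (m + 2) := by
    exact_mod_cast (show 2 * m + 2 - m = m + 2 by omega) ▸ Nat.choose_succ_right_eq (2 * m + 2) m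
  have hc := cast_succ_mul_catalan (m + 1)
  push_cast at hc
  rw [show 2 * (m + 1) = 2 * m + 2 by ring] at hc
  rw [gc]
  push_cast
  rw [show 2 * m + 1 + 1 = 2 * m + 2 by ring]
  field_simp
  apply mul_left_cancel₀ (show (m : ℚ) + 2 ≠ 0 by positivity)
  linear_combination -2 * h - 2 * (m + 1) * hc

theorem gc_pascal (m b : ℕ) : gc (m + 1) (b + 1) = gc (m + 1) b + gc m (b + 2) := by
  obtain ⟨N, hN⟩ : ∃ N, N = 2 * m + b + 3 := ⟨_, rfl⟩
  have hsucc : ((N + 1).choose (m + 1) : ℚ) = N.choose m + N.choose (m + 1) := by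
    exact_mod_cast Nat.choose_succ_succ' N m
  have hratio : (N.choose (m + 1) : ℚ) * (m + 1) = N.choose m * (m + b + 3) := by
    have := Nat.choose_succ_right_eq N m
    rw [show N - m = m + b + 3 by omega] at this
    exact_mod_cast this
  simp only [gc]
  rw [show 2 * (m + 1) + (b + 1) + 1 = N + 1 by omega, show 2 * (m + 1) + b + 1 = N by omega,
    show 2 * m + (b + 2) + 1 = N by omega, hsucc]
  push_cast
  field_simp
  linear_combination 2 * (2 * m + b + 3) * hratio

theorem sum_gc_mul_catalan (M b : ℕ) :
    ∑ p ∈ antidiagonal M, gc p.1 b * catalan p.2 = gc M (b + 1) := by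
  induction M generalizing b with
  | zero => simp [gc_zero_left]
  | succ M ihM =>
    induction b with
    | zero =>
      simp only [gc_zero_right, zero_add, gc_one_right, catalan_succ' (M + 1), Nat.cast_sum,
        Nat.cast_mul]
    | succ b ihb =>
      rw [Nat.sum_antidiagonal_succ] at ihb ⊢
      simp only [gc_pascal, add_mul, sum_add_distrib, gc_zero_left] at ihb ⊢
      linarith [ihM (b + 2)]

instance {n : ℕ} : DecidablePred (Cond (n := n)) := fun u => by unfold Cond; infer_instance

theorem cond_iff {n : ℕ} (u : Fin n → ℕ) :
    Cond u ↔ ∀ i j : Fin n, i < j → u j + i ≤ j ∨ u i + j ≤ u j + i := by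
  simp only [Cond, Fin.lt_def]
  refine forall₂_congr fun i j => imp_congr_right fun _ => ?_
  omega

theorem cond_of_le_one {n : ℕ} (hn : n ≤ 1) (u : Fin n → ℕ) : Cond u := by
  rw [cond_iff]
  intro i j hij
  rw [Fin.lt_def] at hij
  omega

theorem cond_append {c d : ℕ} (x : Fin c → ℕ) (w : Fin d → ℕ) :
    Cond (Fin.append x w) ↔ Cond x ∧ Cond w ∧
      ∀ (i : Fin c) (j : Fin d), w j + i ≤ c + j ∨ x i + (c + j) ≤ w j + i := by
  simp only [cond_iff, Fin.forall_fin_add, forall_and, Fin.append_left, Fin.append_right,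
    Fin.lt_def, Fin.val_castAdd, Fin.val_natAdd]
  constructor
  · rintro ⟨⟨hxx, -⟩, hxw, hww⟩
    refine ⟨hxx, fun i j h => ?_, fun i j => hxw i j (by omega)⟩
    have := hww i j (by omega)
    omega
  · rintro ⟨hxx, hww, hxw⟩
    refine ⟨⟨hxx, fun j i h => by omega⟩, fun i j _ => hxw i j, fun i j h => ?_⟩
    have := hww i j (by omega)
    omega

/-- Positions are `0`-based, so the bound reads `y_i ≤ i + a` in the paper's indexing. -/
def belowSeqs (a m : ℕ) : Finset (Fin m → ℕ) :=
  {y ∈ Fintype.piFinset fun p : Fin m => Icc 1 (p + 1 + a) | Cond y}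

theorem mem_belowSeqs {a m : ℕ} {y : Fin m → ℕ} :
    y ∈ belowSeqs a m ↔ (∀ p, 1 ≤ y p ∧ y p ≤ p + 1 + a) ∧ Cond y := by
  simp [belowSeqs]

theorem card_belowSeqs_zero (a : ℕ) : #(belowSeqs a 0) = 1 :=
  card_eq_one.mpr ⟨Fin.elim0, by ext y; simp [mem_belowSeqs, cond_of_le_one, funext_iff]⟩

/-- `p + 1` for the last position `p` with `y p = p + 1 + a`, and `0` if there is none. -/
def lastPeak {m : ℕ} (a : ℕ) (y : Fin m → ℕ) : ℕ :=
  Nat.findGreatest (fun r => ∃ p : Fin m, (p : ℕ) + 1 = r ∧ y p = r + a) m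

theorem lastPeak_le {m : ℕ} (a : ℕ) (y : Fin m → ℕ) : lastPeak a y ≤ m :=
  Nat.findGreatest_le m

theorem lastPeak_eq_zero_iff {m a : ℕ} {y : Fin m → ℕ} :
    lastPeak a y = 0 ↔ ∀ p : Fin m, y p ≠ p + 1 + a := by
  rw [lastPeak, Nat.findGreatest_eq_zero_iff]
  constructor
  · rintro h p hp
    exact h (Nat.succ_pos p) p.isLt ⟨p, rfl, hp⟩
  · rintro h r - - ⟨p, rfl, hp⟩
    exact h p hp

theorem lastPeak_eq_succ_iff {m a c : ℕ} {y : Fin m → ℕ} :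
    lastPeak a y = c + 1 ↔
      (∃ p : Fin m, (p : ℕ) = c ∧ y p = c + 1 + a) ∧ ∀ q : Fin m, c < q → y q ≠ q + 1 + a := by
  rw [lastPeak, Nat.findGreatest_eq_iff]
  constructor
  · rintro ⟨-, hpeak, hlast⟩
    obtain ⟨p, hp, hyp⟩ := hpeak (Nat.succ_ne_zero c)
    exact ⟨⟨p, by omega, hyp⟩,
      fun q hq hyq => hlast (by omega : c + 1 < q + 1) q.isLt ⟨q, rfl, hyq⟩⟩
  · rintro ⟨⟨p, rfl, hyp⟩, hlast⟩
    refine ⟨p.isLt, fun _ => ⟨p, rfl, hyp⟩, ?_⟩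
    rintro r hr - ⟨q, rfl, hyq⟩
    exact hlast q (by omega) hyq

theorem append_append_mem_filter_lastPeak_iff {a c d : ℕ} (x : Fin c → ℕ) (u : Fin 1 → ℕ)
    (w : Fin d → ℕ) :
    Fin.append (Fin.append x u) w ∈ {y ∈ belowSeqs a (c + 1 + d) | lastPeak a y = c + 1} ↔
      x ∈ belowSeqs a c ∧ u 0 = c + 1 + a ∧ w ∈ belowSeqs 0 d := by
  have hpeak : (∃ p : Fin (c + 1 + d), (p : ℕ) = c ∧
      Fin.append (Fin.append x u) w p = c + 1 + a) ↔ u 0 = c + 1 + a := by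
    constructor
    · rintro ⟨p, hp, hyp⟩
      obtain rfl : p = Fin.castAdd d (Fin.natAdd c 0) := Fin.ext (by simp [hp])
      simpa using hyp
    · exact fun h => ⟨Fin.castAdd d (Fin.natAdd c 0), by simp, by simpa using h⟩
  simp only [mem_filter, mem_belowSeqs, lastPeak_eq_succ_iff, hpeak, cond_append,
    cond_of_le_one le_rfl u, Fin.forall_fin_add, Fin.forall_fin_one, forall_and, Fin.append_left,
    Fin.append_right, Fin.val_castAdd, Fin.val_natAdd, Fin.val_zero, add_zero, true_and]
  constructor
  · rintro ⟨⟨⟨⟨⟨hx1, -⟩, hw1⟩, ⟨hx2, -⟩, hw2⟩, ⟨hx, -⟩, hw, -, hwu⟩, hu, -, hnopeak⟩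
    refine ⟨⟨⟨hx1, hx2⟩, hx⟩, hu, ⟨hw1, fun j => ?_⟩, hw⟩
    have := hwu j
    have := hw2 j
    have := hnopeak j
    omega
  · rintro ⟨⟨⟨hx1, hx2⟩, hx⟩, hu, ⟨hw1, hw2⟩, hw⟩
    refine ⟨⟨⟨⟨⟨hx1, by omega⟩, hw1⟩, ⟨hx2, by omega⟩, fun j => ?_⟩, ⟨hx, fun i => ?_⟩, hw,
      fun i j => ?_, fun j => ?_⟩, hu, ⟨fun i hi => by omega, by omega⟩, fun j _ => ?_⟩
    all_goals first
      | have := hx2 i; omega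
      | have := hw2 j; have := i.isLt; omega
      | have := hw2 j; omega

theorem card_filter_lastPeak_eq_succ {a c d m : ℕ} (h : c + 1 + d = m) :
    #{y ∈ belowSeqs a m | lastPeak a y = c + 1} = #(belowSeqs a c) * #(belowSeqs 0 d) := by
  subst h
  let e := (Equiv.prodCongr (Fin.appendEquiv (α := ℕ) c 1) (Equiv.refl _)).trans
    (Fin.appendEquiv (c + 1) d)
  rw [← card_equiv e (s := (belowSeqs a c ×ˢ {fun _ => c + 1 + a}) ×ˢ belowSeqs 0 d),
    card_product, card_product, card_singleton, mul_one]
  rintro ⟨⟨x, u⟩, w⟩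
  change _ ↔ Fin.append (Fin.append x u) w ∈ _
  rw [append_append_mem_filter_lastPeak_iff]
  simp only [mem_product, mem_singleton, funext_iff, Fin.forall_fin_one, and_assoc]

theorem filter_belowSeqs_succ_lastPeak_eq_zero (b m : ℕ) :
    {y ∈ belowSeqs (b + 1) m | lastPeak (b + 1) y = 0} = belowSeqs b m := by
  ext y
  simp only [mem_filter, mem_belowSeqs, lastPeak_eq_zero_iff]
  constructor
  · rintro ⟨⟨hy, hcond⟩, hpeak⟩
    exact ⟨fun p => ⟨(hy p).1, by have := (hy p).2; have := hpeak p; omega⟩, hcond⟩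
  · rintro ⟨hy, hcond⟩
    exact ⟨⟨fun p => ⟨(hy p).1, by have := (hy p).2; omega⟩, hcond⟩,
      fun p => by have := (hy p).2; omega⟩

theorem filter_belowSeqs_zero_lastPeak_eq_zero (M : ℕ) :
    {y ∈ belowSeqs 0 (M + 1) | lastPeak 0 y = 0} = ∅ := by
  ext y
  simp only [mem_filter, mem_belowSeqs, lastPeak_eq_zero_iff, Finset.notMem_empty, iff_false,
    not_and]
  intro ⟨hy, _⟩ hpeak
  have := hy 0
  have := hpeak 0
  simp only [Fin.val_zero] at *
  omega

theorem card_belowSeqs_succ (a M : ℕ) :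
    #(belowSeqs a (M + 1)) = #{y ∈ belowSeqs a (M + 1) | lastPeak a y = 0} +
      ∑ p ∈ antidiagonal M, #(belowSeqs a p.1) * #(belowSeqs 0 p.2) := by
  rw [card_eq_sum_card_fiberwise (f := lastPeak a) (t := range (M + 2))
    fun y _ => mem_range.mpr (Nat.lt_succ_of_le (lastPeak_le a y)), sum_range_succ',
    Nat.sum_antidiagonal_eq_sum_range_succ_mk, add_comm]
  congr 1
  refine sum_congr rfl fun c hc => card_filter_lastPeak_eq_succ ?_
  have := mem_range.mp hc
  omega

theorem card_belowSeqs (m a : ℕ) : (#(belowSeqs a m) : ℚ) = gc m a := by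
  induction m using Nat.strong_induction_on generalizing a with | _ m ih =>
  obtain _ | M := m
  · simp [card_belowSeqs_zero, gc_zero_left]
  have hsum : ∀ a, ((∑ p ∈ antidiagonal M, #(belowSeqs a p.1) * #(belowSeqs 0 p.2) : ℕ) : ℚ) =
      gc M (a + 1) := fun a => by
    rw [← sum_gc_mul_catalan]
    push_cast
    refine sum_congr rfl fun p hp => ?_
    have := mem_antidiagonal.mp hp
    rw [ih p.1 (by omega), ih p.2 (by omega), gc_zero_right]
  induction a with
  | zero =>
    rw [card_belowSeqs_succ, filter_belowSeqs_zero_lastPeak_eq_zero, card_empty, zero_add, hsum,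
      gc_one_right, gc_zero_right]
  | succ b ihb =>
    rw [card_belowSeqs_succ, filter_belowSeqs_succ_lastPeak_eq_zero, Nat.cast_add, ihb, hsum,
      gc_pascal]

def prefixSeqs (n k : ℕ) : Finset (Fin k → ℕ) :=
  {x ∈ Fintype.piFinset fun _ : Fin k => Icc 1 n | Cond x ∧ ∀ h : 1 ≤ k, k < x ⟨k - 1, by omega⟩}

theorem mem_prefixSeqs {n k : ℕ} {x : Fin k → ℕ} :
    x ∈ prefixSeqs n k ↔
      (∀ i, 1 ≤ x i ∧ x i ≤ n) ∧ Cond x ∧ ∀ h : 1 ≤ k, k < x ⟨k - 1, by omega⟩ := by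
  simp [prefixSeqs]

theorem card_prefixSeqs_zero (n : ℕ) : #(prefixSeqs n 0) = 1 :=
  card_eq_one.mpr ⟨Fin.elim0, by ext x; simp [mem_prefixSeqs, cond_of_le_one, funext_iff]⟩

theorem append_mem_prefixSeqs_iff {n K : ℕ} (y : Fin K → ℕ) (u : Fin 1 → ℕ) :
    Fin.append y u ∈ prefixSeqs n (K + 1) ↔
      K + 1 < u 0 ∧ u 0 ≤ n ∧ y ∈ belowSeqs (u 0 - (K + 1)) K := by
  have hlast : Fin.append y u ⟨K + 1 - 1, by omega⟩ = u 0 := Fin.append_right y u 0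
  simp only [mem_prefixSeqs, mem_belowSeqs, hlast, cond_append, cond_of_le_one le_rfl u,
    Fin.forall_fin_add, Fin.forall_fin_one, forall_and, Fin.append_left, Fin.append_right,
    Fin.val_zero, add_zero, true_and, Nat.le_add_left, forall_const]
  constructor
  · rintro ⟨⟨⟨hy1, -⟩, -, hun⟩, ⟨hy, hyu⟩, hu⟩
    refine ⟨hu, hun, ⟨hy1, fun i => ?_⟩, hy⟩
    have := hyu i
    omega
  · rintro ⟨hu, hun, ⟨hy1, hy2⟩, hy⟩
    refine ⟨⟨⟨hy1, by omega⟩, fun i => ?_, hun⟩, ⟨hy, fun i => ?_⟩, hu⟩ <;>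
    · have := hy2 i
      have := i.isLt
      omega

theorem prefixSeqs_self {k : ℕ} (hk : 1 ≤ k) : prefixSeqs k k = ∅ := by
  ext x
  simp only [mem_prefixSeqs, Finset.notMem_empty, iff_false, not_and]
  intro hx _ hlast
  have := (hx ⟨k - 1, by omega⟩).2
  have := hlast hk
  omega

theorem card_prefixSeqs_succ_succ {n K : ℕ} (hK : K + 1 ≤ n) :
    #(prefixSeqs (n + 1) (K + 1)) = #(prefixSeqs n (K + 1)) + #(belowSeqs (n - K) K) := by
  rw [← card_filter_add_card_filter_not (s := prefixSeqs (n + 1) (K + 1))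
    fun x => x (Fin.last K) ≤ n]
  congr 1
  · congr 1
    ext x
    obtain ⟨⟨y, u⟩, rfl⟩ := (Fin.appendEquiv K 1).surjective x
    have hlast : Fin.append y u (Fin.last K) = u 0 := Fin.append_right y u 0
    change Fin.append y u ∈ _ ↔ Fin.append y u ∈ _
    rw [mem_filter, append_mem_prefixSeqs_iff, append_mem_prefixSeqs_iff, hlast]
    constructor
    · rintro ⟨⟨hu, -, hy⟩, hun⟩
      exact ⟨hu, hun, hy⟩
    · rintro ⟨hu, hun, hy⟩
      exact ⟨⟨hu, by omega, hy⟩, hun⟩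
  · rw [← card_equiv (Fin.appendEquiv K 1) (s := belowSeqs (n - K) K ×ˢ {fun _ => n + 1}),
      card_product, card_singleton, mul_one]
    rintro ⟨y, u⟩
    have hlast : Fin.append y u (Fin.last K) = u 0 := Fin.append_right y u 0
    change _ ↔ Fin.append y u ∈ _
    rw [mem_filter, append_mem_prefixSeqs_iff, hlast]
    simp only [mem_product, mem_singleton, funext_iff, Fin.forall_fin_one]
    constructor
    · rintro ⟨hy, hu⟩
      refine ⟨⟨by omega, by omega, ?_⟩, by omega⟩
      rwa [hu, show n + 1 - (K + 1) = n - K by omega]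
    · rintro ⟨⟨-, hun, hy⟩, hu⟩
      obtain hu : u 0 = n + 1 := by omega
      rw [hu, show n + 1 - (K + 1) = n - K by omega] at hy
      exact ⟨hy, hu⟩

theorem card_prefixSeqs {n k : ℕ} (hk : k < n) : (#(prefixSeqs n k) : ℚ) = gc k (n - 1 - k) := by
  obtain _ | K := k
  · simp [card_prefixSeqs_zero, gc_zero_left]
  induction n, hk using Nat.le_induction with
  | base =>
    rw [card_prefixSeqs_succ_succ le_rfl, prefixSeqs_self (by omega), card_empty, Nat.cast_add,
      card_belowSeqs, Nat.add_sub_cancel_left, gc_one_right, Nat.cast_zero, zero_add,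
      show (K + 1).succ - 1 - (K + 1) = 0 by omega, gc_zero_right]
  | succ n hn ih =>
    obtain ⟨b, rfl⟩ : ∃ b, n = K + 2 + b := ⟨n - (K + 2), by omega⟩
    rw [card_prefixSeqs_succ_succ (by omega), Nat.cast_add, ih, card_belowSeqs,
      show K + 2 + b - 1 - (K + 1) = b by omega, show K + 2 + b - K = b + 2 by omega,
      show K + 2 + b + 1 - 1 - (K + 1) = b + 1 by omega, gc_pascal]

theorem ncard_eq_of_equiv {α β : Type*} (e : α ≃ β) {s : Set α} {t : Set β}
    (h : ∀ a, e a ∈ t ↔ a ∈ s) : t.ncard = s.ncard := by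
  rw [← Set.ncard_preimage_of_injective_subset_range e.injective (by simp)]
  exact congrArg Set.ncard (Set.ext h)

theorem append_mem_lastExcedance_iff {k d : ℕ} (x : Fin k → ℕ) (w : Fin d → ℕ) :
    Fin.append x w ∈ {u : Fin (k + d) → ℕ | (∀ i, 1 ≤ u i ∧ u i ≤ k + d) ∧ Cond u ∧
        (∀ hk : 1 ≤ k, k < u ⟨k - 1, by omega⟩) ∧
        (∀ j : Fin (k + d), k < (j : ℕ) + 1 → u j ≤ (j : ℕ) + 1)} ↔
      x ∈ prefixSeqs (k + d) k ∧ w ∈ belowSeqs 0 d := by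
  have hlast (hk : 1 ≤ k) : Fin.append x w ⟨k - 1, by omega⟩ = x ⟨k - 1, by omega⟩ :=
    Fin.append_left x w ⟨k - 1, by omega⟩
  simp only [Set.mem_ofPred_eq, mem_prefixSeqs, mem_belowSeqs, cond_append,
    Fin.forall_fin_add, forall_and, Fin.append_left, Fin.append_right, Fin.val_castAdd,
    Fin.val_natAdd, add_zero]
  constructor
  · rintro ⟨⟨⟨hx1, hw1⟩, hx2, -⟩, ⟨hx, hw, hcross⟩, hk, -, hwk⟩
    refine ⟨⟨⟨hx1, hx2⟩, hx, fun h => hlast h ▸ hk h⟩, ⟨hw1, fun j => ?_⟩, hw⟩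
    have := hwk j (by omega)
    rcases Nat.eq_zero_or_pos k with rfl | hk0
    · omega
    · have := hlast hk0 ▸ hk hk0
      have := hcross ⟨k - 1, by omega⟩ j
      simp only at this
      omega
  · rintro ⟨⟨⟨hx1, hx2⟩, hx, hk⟩, ⟨hw1, hw2⟩, hw⟩
    refine ⟨⟨⟨hx1, hw1⟩, hx2, fun j => ?_⟩, ⟨hx, hw, fun i j => ?_⟩, fun h => hlast h ▸ hk h,
      fun i hi => by omega, fun j _ => by have := hw2 j; omega⟩
    · have := hw2 j
      omega
    · have := hw2 j
      omega

theorem stmt16 (n k : ℕ) (hn : 1 ≤ n) (hk : k ≤ n - 1) :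
    ({u : Fin n → ℕ | (∀ i, 1 ≤ u i ∧ u i ≤ n) ∧ Cond u ∧
        (1 ≤ k → k < u ⟨k - 1, by omega⟩) ∧
        (∀ j : Fin n, k < (j : ℕ) + 1 → u j ≤ (j : ℕ) + 1)}.ncard : ℚ)
      = gc k (n - 1 - k) * cat (n - k) := by
  obtain ⟨d, rfl⟩ : ∃ d, n = k + d := ⟨n - k, by omega⟩
  rw [ncard_eq_of_equiv (Fin.appendEquiv k d) (s := ↑(prefixSeqs (k + d) k ×ˢ belowSeqs 0 d))
      fun p => (append_mem_lastExcedance_iff p.1 p.2).trans (by simp),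
    Set.ncard_coe_finset, card_product, Nat.cast_mul, card_prefixSeqs (by omega), card_belowSeqs,
    gc_zero_right, cat_eq_catalan, Nat.add_sub_cancel_left]
end
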